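/- The function 𝓛(z) = 𝓛₂(1-z) + (1/4)(log z)² satisfies 𝓛(1/z) = -𝓛(z) for all z in ℂ not in (-∞,0]. -/

import Mathlib

open Complex

/-- The dilogarithm `𝓛₂(z) = -∫₀^z log(1-s)/s ds`, as an integral along the
straight path from `0` to `z`. -/
noncomputable def dilog (z : ℂ) : ℂ :=
  -∫ t in (0:ℝ)..1, Complex.log (1 - (t : ℂ) * z) / (t : ℂ)

/-- `𝓛(z) = 𝓛₂(1-z) + (1/4)(log z)²`. -/
noncomputable def scrL (z : ℂ) : ℂ := dilog (1 - z) + (1/4) * (Complex.log z)^2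

/-!
Differentiating under the integral sign shows that `dilog` is holomorphic on
`{w | 1 - w ∈ slitPlane}` with `dilog' w = -log (1 - w) / w`, so `F v = scrL v⁻¹ + scrL v` is
holomorphic on the slit plane. Since `log v⁻¹ = -log v` there, `F' = 0`; the slit plane is
connected, so `F` is constant, equal to `F 1 = 2 * scrL 1 = 0`.
-/

open Set Metric

namespace Complex

lemma inv_mem_slitPlane {w : ℂ} (hw : w ∈ slitPlane) : w⁻¹ ∈ slitPlane := by
  have hn : 0 < normSq w := normSq_pos.2 (slitPlane_ne_zero hw)
  rw [mem_slitPlane_iff] at hw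
  rw [mem_slitPlane_iff, inv_re, inv_im]
  rcases hw with h | h
  · exact .inl (by positivity)
  · exact .inr (by simp [h, hn.ne'])

lemma isPreconnected_slitPlane : IsPreconnected slitPlane :=
  (starConvex_one_slitPlane.isPathConnected one_mem_slitPlane).isConnected.isPreconnected

lemma one_sub_ofReal_mul_mem_slitPlane {w : ℂ} (hw : 1 - w ∈ slitPlane) {t : ℝ}
    (ht : t ∈ Icc (0:ℝ) 1) : 1 - (t : ℂ) * w ∈ slitPlane := by
  simpa [real_smul, sub_eq_add_neg] using
    starConvex_one_slitPlane.add_smul_sub_mem hw ht.1 ht.2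

end Complex

lemma exists_le_norm_one_sub_mul {w : ℂ} (hw : 1 - w ∈ slitPlane) :
    ∃ r > 0, ∃ δ > 0, ∀ t ∈ Icc (0:ℝ) 1, ∀ x ∈ closedBall w r,
      1 - x ∈ slitPlane ∧ δ ≤ ‖1 - (t : ℂ) * x‖ := by
  obtain ⟨r, hr, hball⟩ : ∃ r > 0, closedBall w r ⊆ (1 - ·) ⁻¹' slitPlane :=
    nhds_basis_closedBall.mem_iff.1 <|
      (isOpen_slitPlane.preimage (by fun_prop)).mem_nhds hw
  have hK : IsCompact (Icc (0:ℝ) 1 ×ˢ closedBall w r) :=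
    isCompact_Icc.prod (isCompact_closedBall w r)
  obtain ⟨p, hp, hmin⟩ := hK.exists_isMinOn ⟨(0, w), ⟨by simp, mem_closedBall_self hr.le⟩⟩
    (f := fun p : ℝ × ℂ => ‖1 - (p.1 : ℂ) * p.2‖) (by fun_prop)
  refine ⟨r, hr, _, norm_pos_iff.2 <| slitPlane_ne_zero <|
    one_sub_ofReal_mul_mem_slitPlane (hball (mem_prod.1 hp).2) (mem_prod.1 hp).1,
    fun t ht x hx => ⟨hball hx, isMinOn_iff.1 hmin (t, x) ⟨ht, hx⟩⟩⟩

lemma intervalIntegrable_log_one_sub_mul_div {w : ℂ} (hw : 1 - w ∈ slitPlane) :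
    IntervalIntegrable (fun t : ℝ => log (1 - (t : ℂ) * w) / t) MeasureTheory.volume 0 1 := by
  set f : ℝ → ℂ := fun t => log (1 - (t : ℂ) * w)
  have hf : ∀ t ∈ Icc (0:ℝ) 1, HasDerivAt f (-w / (1 - t * w)) t := by
    intro t ht
    have := ((hasDerivAt_log (one_sub_ofReal_mul_mem_slitPlane hw ht)).comp (t : ℂ)
      (((hasDerivAt_id (t : ℂ)).mul_const w).const_sub 1)).comp_ofReal
    simpa [div_eq_inv_mul] using this
  have hcont : ContinuousOn (dslope f 0) (uIcc 0 1) := by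
    intro t ht
    rw [uIcc_of_le (zero_le_one' ℝ)] at ht
    refine ContinuousAt.continuousWithinAt ?_
    rcases eq_or_ne t 0 with rfl | ht0
    · exact continuousAt_dslope_same.2 (hf 0 ht).differentiableAt
    · exact (continuousAt_dslope_of_ne ht0).2 (hf t ht).continuousAt
  -- on `(0, 1]` the integrand is the difference quotient `dslope f 0`, continuous on `[0, 1]`
  refine (hcont.intervalIntegrable (μ := MeasureTheory.volume)).congr ?_
  intro t ht
  rw [uIoc_of_le (zero_le_one' ℝ)] at ht
  simp [dslope_of_ne _ ht.1.ne', slope_def_module, f, div_eq_inv_mul]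

lemma hasDerivAt_dilog {w : ℂ} (hw : 1 - w ∈ slitPlane) :
    HasDerivAt dilog (∫ t in (0:ℝ)..1, (1 - (t : ℂ) * w)⁻¹) w := by
  obtain ⟨r, hr, δ, hδ, hbound⟩ := exists_le_norm_one_sub_mul hw
  have hball : ∀ t ∈ uIoc (0:ℝ) 1, ∀ x ∈ ball w r,
      1 - (t : ℂ) * x ∈ slitPlane ∧ δ ≤ ‖1 - (t : ℂ) * x‖ := by
    intro t ht x hx
    rw [uIoc_of_le (zero_le_one' ℝ)] at ht
    obtain ⟨hx1, hδx⟩ := hbound t (Ioc_subset_Icc_self ht) x (ball_subset_closedBall hx)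
    exact ⟨one_sub_ofReal_mul_mem_slitPlane hx1 (Ioc_subset_Icc_self ht), hδx⟩
  have key := intervalIntegral.hasDerivAt_integral_of_dominated_loc_of_deriv_le
    (F := fun x (t : ℝ) => log (1 - (t : ℂ) * x) / t) (F' := fun x t => -(1 - (t : ℂ) * x)⁻¹)
    (bound := fun _ => δ⁻¹) (ball_mem_nhds w hr)
    (.of_forall fun x => (by fun_prop : Measurable _).aestronglyMeasurable)
    (intervalIntegrable_log_one_sub_mul_div hw)
    (by fun_prop) (.of_forall fun t ht x hx => ?_) intervalIntegrable_const
    (.of_forall fun t ht x hx => ?_)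
  · refine key.2.neg.congr_deriv ?_
    simp [intervalIntegral.integral_neg]
  · rw [norm_neg, norm_inv]
    exact inv_anti₀ hδ (hball t ht x hx).2
  · have ht0 : (t : ℂ) ≠ 0 := by
      rw [uIoc_of_le (zero_le_one' ℝ)] at ht
      exact_mod_cast ht.1.ne'
    have hx := (hball t ht x hx).1
    have := ((hasDerivAt_log hx).comp x
      (((hasDerivAt_id x).const_mul (t : ℂ)).const_sub 1)).div_const (t : ℂ)
    refine this.congr_deriv ?_
    field_simp

lemma hasDerivAt_dilog_of_ne_zero {w : ℂ} (hw : 1 - w ∈ slitPlane) (hw0 : w ≠ 0) :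
    HasDerivAt dilog (-log (1 - w) / w) w := by
  refine (hasDerivAt_dilog hw).congr_deriv ?_
  have h := log_inv_eq_integral hw
  rw [log_inv _ (slitPlane_arg_ne_pi hw)] at h
  simp only [real_smul] at h
  rw [eq_div_iff hw0]
  linear_combination -h

lemma dilog_zero : dilog 0 = 0 := by
  simp [dilog]

lemma scrL_one : scrL 1 = 0 := by
  simp [scrL, dilog_zero]

lemma differentiableAt_scrL {u : ℂ} (hu : u ∈ slitPlane) : DifferentiableAt ℂ scrL u :=
  ((hasDerivAt_dilog (by rwa [sub_sub_cancel])).differentiableAt.comp u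
    (differentiableAt_id.const_sub 1)).add
    (((differentiableAt_log hu).pow 2).const_mul _)

lemma hasDerivAt_scrL {u : ℂ} (hu : u ∈ slitPlane) (hu1 : u ≠ 1) :
    HasDerivAt scrL (log u / (1 - u) + log u / (2 * u)) u := by
  have hdilog := (hasDerivAt_dilog_of_ne_zero (w := 1 - u) (by rwa [sub_sub_cancel])
    (sub_ne_zero.2 hu1.symm)).comp u ((hasDerivAt_id u).const_sub 1)
  have hlog := ((hasDerivAt_log hu).pow 2).const_mul (1 / 4 : ℂ)
  refine (hdilog.add hlog).congr_deriv ?_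
  rw [sub_sub_cancel]
  field_simp
  ring

lemma hasDerivAt_scrL_inv_add_scrL {u : ℂ} (hu : u ∈ slitPlane) :
    HasDerivAt (fun v => scrL v⁻¹ + scrL v) 0 u := by
  have hinv := inv_mem_slitPlane hu
  have h := ((differentiableAt_scrL hinv).hasDerivAt.comp u
    (hasDerivAt_inv (slitPlane_ne_zero hu))).add (differentiableAt_scrL hu).hasDerivAt
  refine h.congr_deriv ?_
  rcases eq_or_ne u 1 with rfl | hu1
  · -- the chain-rule factor `-(u ^ 2)⁻¹` is `-1` at `u = 1`, whatever `deriv scrL 1` is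
    simp
  · rw [(hasDerivAt_scrL hinv (inv_ne_one.2 hu1)).deriv, (hasDerivAt_scrL hu hu1).deriv,
      log_inv _ (slitPlane_arg_ne_pi hu)]
    have hu0 := slitPlane_ne_zero hu
    have hu1' : 1 - u ≠ 0 := sub_ne_zero.2 hu1.symm
    field_simp
    ring

/-- `𝓛(1/z) = -𝓛(z)` away from the branch cut `(-∞,0]`. -/
theorem scrL_inv (z : ℂ) (hz : ¬(z.im = 0 ∧ z.re ≤ 0)) :
    scrL (1/z) = -scrL z := by
  have hzs : z ∈ slitPlane := by
    rw [not_and_or, not_le] at hz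
    exact mem_slitPlane_iff.2 hz.symm
  have h := isOpen_slitPlane.is_const_of_deriv_eq_zero isPreconnected_slitPlane
    (fun v hv => (hasDerivAt_scrL_inv_add_scrL hv).differentiableAt.differentiableWithinAt)
    (fun v hv => (hasDerivAt_scrL_inv_add_scrL hv).deriv) hzs one_mem_slitPlane
  rw [inv_one, scrL_one, add_zero] at h
  rw [one_div]
  linear_combination h
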